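/- Let (a_n) be a sequence of positive integers and q > 1. Then ‖a_n‖_q → 0 as n → ∞ if and only if for every positive integer k there exists ν(k) such that k | a_n for all n ≥ ν(k). -/

import Mathlib

/-!
A non-divisor `k` of `n` alone contributes `1 / q ^ k` to `‖n‖_q`, while if every `k ≤ K` divides
`n` then only the geometric tail beyond `K` survives, so `‖n‖_q ≤ 1 / ((q - 1) q ^ K)`.
-/

/-- The q-norm of an integer n: sum of 1/q^k over positive integers k not dividing n. -/
noncomputable def qnorm (q : ℝ) (n : ℤ) : ℝ :=
  ∑' k : ℕ, if 1 ≤ k ∧ ¬ ((k : ℤ) ∣ n) then 1 / q ^ k else 0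

open Filter Topology

noncomputable def qnormSummand (q : ℝ) (n : ℤ) (k : ℕ) : ℝ :=
  if 1 ≤ k ∧ ¬ ((k : ℤ) ∣ n) then 1 / q ^ k else 0

lemma qnorm_eq_tsum (q : ℝ) (n : ℤ) : qnorm q n = ∑' k, qnormSummand q n k := rfl

variable {q : ℝ}

lemma qnormSummand_nonneg (hq : 0 ≤ q) (n : ℤ) (k : ℕ) : 0 ≤ qnormSummand q n k := by
  unfold qnormSummand
  split <;> positivity

lemma qnormSummand_le (hq : 0 ≤ q) (n : ℤ) (k : ℕ) : qnormSummand q n k ≤ (1 / q) ^ k := by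
  unfold qnormSummand
  split
  · rw [one_div_pow]
  · positivity

lemma summable_qnormSummand (hq : 1 < q) (n : ℤ) : Summable (qnormSummand q n) :=
  .of_nonneg_of_le (qnormSummand_nonneg (by positivity) n) (qnormSummand_le (by positivity) n)
    (summable_geometric_of_lt_one (by positivity) ((div_lt_one (by positivity)).2 hq))

lemma qnorm_nonneg (hq : 0 ≤ q) (n : ℤ) : 0 ≤ qnorm q n :=
  tsum_nonneg (qnormSummand_nonneg hq n)

lemma one_div_pow_le_qnorm (hq : 1 < q) {n : ℤ} {k : ℕ} (hk : 1 ≤ k) (hkn : ¬ (k : ℤ) ∣ n) :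
    1 / q ^ k ≤ qnorm q n := by
  have h := (summable_qnormSummand hq n).le_tsum k fun j _ =>
    qnormSummand_nonneg (by positivity) n j
  rwa [qnormSummand, if_pos ⟨hk, hkn⟩] at h

lemma qnorm_le_of_forall_dvd (hq : 1 < q) {n : ℤ} (K : ℕ)
    (hdvd : ∀ k ∈ Finset.Icc 1 K, (k : ℤ) ∣ n) : qnorm q n ≤ 1 / ((q - 1) * q ^ K) := by
  have hq0 : 0 < q := by positivity
  have hr : 1 / q < 1 := (div_lt_one hq0).2 hq
  have head : ∑ k ∈ Finset.range (K + 1), qnormSummand q n k = 0 := by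
    refine Finset.sum_eq_zero fun k hk => if_neg ?_
    rintro ⟨hk1, hkn⟩
    exact hkn (hdvd k (Finset.mem_Icc.2 ⟨hk1, Nat.lt_succ_iff.1 (Finset.mem_range.1 hk)⟩))
  have hgeo := summable_geometric_of_lt_one (by positivity) hr
  calc qnorm q n = ∑' j, qnormSummand q n (j + (K + 1)) := by
        rw [qnorm_eq_tsum, ← (summable_qnormSummand hq n).sum_add_tsum_nat_add (K + 1), head,
          zero_add]
    _ ≤ ∑' j, (1 / q) ^ (j + (K + 1)) :=
        ((summable_qnormSummand hq n).comp_injective (add_left_injective _)).tsum_le_tsum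
          (fun j => qnormSummand_le hq0.le n _) (hgeo.comp_injective (add_left_injective _))
    _ = (1 / q) ^ (K + 1) * (1 - 1 / q)⁻¹ := by
        simp_rw [pow_add]
        rw [tsum_mul_right, tsum_geometric_of_lt_one (by positivity) hr, mul_comm]
    _ = 1 / ((q - 1) * q ^ K) := by
        rw [div_pow, one_pow, pow_succ]
        field_simp

lemma tendsto_qnorm_zero_iff {ι : Type*} {l : Filter ι} (hq : 1 < q) (a : ι → ℤ) :
    Tendsto (fun i => qnorm q (a i)) l (𝓝 0) ↔ ∀ k : ℕ, 1 ≤ k → ∀ᶠ i in l, (k : ℤ) ∣ a i := by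
  have hq0 : 0 < q := by positivity
  constructor
  · intro h k hk
    filter_upwards [h.eventually (eventually_lt_nhds (b := 1 / q ^ k) (by positivity))] with i hi
    by_contra hkn
    exact (one_div_pow_le_qnorm hq hk hkn).not_gt hi
  · intro h
    have hbound : Tendsto (fun K : ℕ => 1 / ((q - 1) * q ^ K)) atTop (𝓝 0) :=
      tendsto_const_nhds.div_atTop
        ((tendsto_pow_atTop_atTop_of_one_lt hq).const_mul_atTop' (sub_pos.2 hq))
    refine tendsto_order.2 ⟨fun c hc => .of_forall fun i => hc.trans_le (qnorm_nonneg hq0.le _),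
      fun ε hε => ?_⟩
    obtain ⟨K, hK⟩ := (hbound.eventually (eventually_lt_nhds hε)).exists
    filter_upwards [(Finset.Icc 1 K).eventually_all.2 fun k hk => h k (Finset.mem_Icc.1 hk).1]
      with i hi
    exact (qnorm_le_of_forall_dvd hq K hi).trans_lt hK

theorem stmt_14_general (q : ℝ) (hq : 1 < q) (a : ℕ → ℕ) :
    Filter.Tendsto (fun n => qnorm q ((a n : ℤ))) Filter.atTop (nhds 0)
      ↔ (∀ k : ℕ, 1 ≤ k → ∃ ν, ∀ n ≥ ν, k ∣ a n) := by
  simp only [tendsto_qnorm_zero_iff hq, Int.natCast_dvd_natCast, eventually_atTop]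

theorem stmt_14 (q : ℝ) (hq : 1 < q) (a : ℕ → ℕ) (ha : ∀ n, 0 < a n) :
    Filter.Tendsto (fun n => qnorm q ((a n : ℤ))) Filter.atTop (nhds 0)
      ↔ (∀ k : ℕ, 1 ≤ k → ∃ ν, ∀ n ≥ ν, k ∣ a n) :=
  stmt_14_general q hq a
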